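/- Let X be a complex Banach space and let T ∈ L(X). Then π(T) is Drazin invertible in the algebra C₀(X) = L(X)/F₀(X) if and only if π(T) is both left Drazin invertible and right Drazin invertible in C₀(X). -/

import Mathlib

noncomputable section

/-- The two-sided ideal `F₀(X)` of finite-rank operators in `L(X)`. -/
def finiteRankIdeal (X : Type*) [NormedAddCommGroup X] [NormedSpace ℂ X] :
    TwoSidedIdeal (X →L[ℂ] X) :=
  TwoSidedIdeal.mk'
    {F : X →L[ℂ] X | FiniteDimensional ℂ (LinearMap.range F.toLinearMap)}
    (by
      show FiniteDimensional ℂ (LinearMap.range (0 : X →L[ℂ] X).toLinearMap)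
      rw [show LinearMap.range (0 : X →L[ℂ] X).toLinearMap = ⊥ by ext x; simp [eq_comm]]
      infer_instance)
    (by
      intro x y hx hy
      haveI : FiniteDimensional ℂ (LinearMap.range x.toLinearMap) := hx
      haveI : FiniteDimensional ℂ (LinearMap.range y.toLinearMap) := hy
      have hle : LinearMap.range (x + y).toLinearMap ≤ LinearMap.range x.toLinearMap ⊔ LinearMap.range y.toLinearMap := by
        rintro z ⟨w, rfl⟩
        exact Submodule.add_mem_sup (LinearMap.mem_range_self x.toLinearMap w) (LinearMap.mem_range_self y.toLinearMap w)
      exact Submodule.finiteDimensional_of_le hle)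
    (by
      intro x hx
      haveI : FiniteDimensional ℂ (LinearMap.range x.toLinearMap) := hx
      have hle : LinearMap.range (-x).toLinearMap ≤ LinearMap.range x.toLinearMap := by
        rintro z ⟨w, rfl⟩; exact ⟨-w, by simp⟩
      exact Submodule.finiteDimensional_of_le hle)
    (by
      intro x y hy
      haveI : FiniteDimensional ℂ (LinearMap.range y.toLinearMap) := hy
      haveI : FiniteDimensional ℂ (Submodule.map (x : X →ₗ[ℂ] X) (LinearMap.range y.toLinearMap)) :=
        Module.Finite.map _ _
      have hle : LinearMap.range (x * y).toLinearMap ≤ Submodule.map (x : X →ₗ[ℂ] X) (LinearMap.range y.toLinearMap) := by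
        rintro z ⟨w, rfl⟩; exact ⟨y w, LinearMap.mem_range_self y.toLinearMap w, rfl⟩
      exact Submodule.finiteDimensional_of_le hle)
    (by
      intro x y hx
      haveI : FiniteDimensional ℂ (LinearMap.range x.toLinearMap) := hx
      have hle : LinearMap.range (x * y).toLinearMap ≤ LinearMap.range x.toLinearMap := by
        rintro z ⟨w, rfl⟩; exact ⟨y w, rfl⟩
      exact Submodule.finiteDimensional_of_le hle)

/-- Restriction of a bounded operator to an invariant subspace, as a bounded
operator on that subspace. -/
def clmRestrict {X : Type*} [NormedAddCommGroup X] [NormedSpace ℂ X]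
    (T : X →L[ℂ] X) (M : Submodule ℂ X) (h : ∀ x ∈ M, T x ∈ M) : M →L[ℂ] M where
  toLinearMap := (T : X →ₗ[ℂ] X).restrict h
  cont := by
    show Continuous fun x : M => (⟨T x, h x x.2⟩ : M)
    exact Continuous.subtype_mk (T.continuous.comp continuous_subtype_val) _

/-- The set `Δ(T)` of stable iteration indices:
`Δ(T) = {n : ∀ m ≥ n, N(T) ∩ R(T^n) ⊆ N(T) ∩ R(T^m)}`. -/
def disSet {X : Type*} [NormedAddCommGroup X] [NormedSpace ℂ X] (T : X →L[ℂ] X) : Set ℕ :=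
  {n | ∀ m, n ≤ m →
    (LinearMap.ker T.toLinearMap ⊓ LinearMap.range (T ^ n).toLinearMap : Submodule ℂ X) ≤
      LinearMap.ker T.toLinearMap ⊓ LinearMap.range (T ^ m).toLinearMap}

/-- `T` is quasi-Fredholm of degree `d` : `dis(T) = d` (i.e. `d` is the least element of
`Δ(T)`), `N(T) ∩ R(T^d)` is a closed complemented subspace of `X`, and `R(T) + N(T^d)` is a
closed complemented subspace of `X`. -/
def IsQuasiFredholmOfDegree {X : Type*} [NormedAddCommGroup X] [NormedSpace ℂ X]
    (T : X →L[ℂ] X) (d : ℕ) : Prop :=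
  IsLeast (disSet T) d ∧
    IsClosed ((LinearMap.ker T.toLinearMap ⊓ LinearMap.range (T ^ d).toLinearMap : Submodule ℂ X) : Set X) ∧
    (LinearMap.ker T.toLinearMap ⊓ LinearMap.range (T ^ d).toLinearMap).ClosedComplemented ∧
    IsClosed ((LinearMap.range T.toLinearMap ⊔ LinearMap.ker (T ^ d).toLinearMap : Submodule ℂ X) : Set X) ∧
    (LinearMap.range T.toLinearMap ⊔ LinearMap.ker (T ^ d).toLinearMap).ClosedComplemented

/-- `T` is quasi-Fredholm if it is quasi-Fredholm of some degree `d`. -/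
def IsQuasiFredholm {X : Type*} [NormedAddCommGroup X] [NormedSpace ℂ X]
    (T : X →L[ℂ] X) : Prop :=
  ∃ d : ℕ, IsQuasiFredholmOfDegree T d

/-- Left semi-Fredholm: closed range, finite-dimensional kernel, and range complemented
(i.e. the range of a bounded projection). -/
def IsLeftSemiFredholm {Y : Type*} [NormedAddCommGroup Y] [NormedSpace ℂ Y]
    (S : Y →L[ℂ] Y) : Prop :=
  IsClosed ((LinearMap.range S.toLinearMap : Submodule ℂ Y) : Set Y) ∧
    FiniteDimensional ℂ (LinearMap.ker S.toLinearMap) ∧ (LinearMap.range S.toLinearMap).ClosedComplemented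

/-- Right semi-Fredholm: closed range of finite codimension, and kernel complemented
(i.e. the range of a bounded projection). -/
def IsRightSemiFredholm {Y : Type*} [NormedAddCommGroup Y] [NormedSpace ℂ Y]
    (S : Y →L[ℂ] Y) : Prop :=
  IsClosed ((LinearMap.range S.toLinearMap : Submodule ℂ Y) : Set Y) ∧
    FiniteDimensional ℂ (Y ⧸ LinearMap.range S.toLinearMap) ∧ (LinearMap.ker S.toLinearMap).ClosedComplemented

/-- Fredholm: closed range, finite-dimensional kernel, range of finite codimension. -/
def IsFredholmOp {Y : Type*} [NormedAddCommGroup Y] [NormedSpace ℂ Y]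
    (S : Y →L[ℂ] Y) : Prop :=
  IsClosed ((LinearMap.range S.toLinearMap : Submodule ℂ Y) : Set Y) ∧
    FiniteDimensional ℂ (LinearMap.ker S.toLinearMap) ∧ FiniteDimensional ℂ (Y ⧸ LinearMap.range S.toLinearMap)

/-- Regular operator: kernel and range are complemented (closed) subspaces. -/
def IsRegularOp {Y : Type*} [NormedAddCommGroup Y] [NormedSpace ℂ Y]
    (S : Y →L[ℂ] Y) : Prop :=
  (LinearMap.ker S.toLinearMap).ClosedComplemented ∧ (LinearMap.range S.toLinearMap).ClosedComplemented

lemma range_pow_invariant {X : Type*} [NormedAddCommGroup X] [NormedSpace ℂ X]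
    (T : X →L[ℂ] X) (n : ℕ) :
    ∀ x ∈ LinearMap.range (T ^ n).toLinearMap, T x ∈ LinearMap.range (T ^ n).toLinearMap := by
  rintro x ⟨y, rfl⟩
  exact ⟨T y, by
    show (T ^ n * T) y = (T * T ^ n) y
    rw [← pow_succ, ← pow_succ']⟩

/-- B-Fredholm: for some `n`, `R(T^n)` is closed and the restriction of `T` to `R(T^n)`,
viewed as an operator from `R(T^n)` to `R(T^n)`, is a Fredholm operator. -/
def IsBFredholm {X : Type*} [NormedAddCommGroup X] [NormedSpace ℂ X]
    (T : X →L[ℂ] X) : Prop :=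
  ∃ n : ℕ, IsClosed ((LinearMap.range (T ^ n).toLinearMap : Submodule ℂ X) : Set X) ∧
    IsFredholmOp (clmRestrict T (LinearMap.range (T ^ n).toLinearMap) (range_pow_invariant T n))

/-- Left Drazin invertible element of a unital ring: there is an idempotent `p`
commuting with `a` such that `a * p` is nilpotent and `a + p` has a left inverse
commuting with `p`. -/
def IsLeftDrazinInvertible {A : Type*} [Ring A] (a : A) : Prop :=
  ∃ p : A, IsIdempotentElem p ∧ a * p = p * a ∧ IsNilpotent (a * p) ∧
    ∃ b : A, b * (a + p) = 1 ∧ b * p = p * b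

/-- Right Drazin invertible element of a unital ring: there is an idempotent `p`
commuting with `a` such that `a * p` is nilpotent and `a + p` has a right inverse
commuting with `p`. -/
def IsRightDrazinInvertible {A : Type*} [Ring A] (a : A) : Prop :=
  ∃ p : A, IsIdempotentElem p ∧ a * p = p * a ∧ IsNilpotent (a * p) ∧
    ∃ b : A, (a + p) * b = 1 ∧ b * p = p * b

/-- Drazin invertible element of a unital ring: there is an idempotent `p`
commuting with `a` such that `a * p` is nilpotent and `a + p` is invertible. -/
def IsDrazinInvertible {A : Type*} [Ring A] (a : A) : Prop :=
  ∃ p : A, IsIdempotentElem p ∧ a * p = p * a ∧ IsNilpotent (a * p) ∧ IsUnit (a + p)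

end

/-!
The equivalence holds in every unital ring. If `b (a + p) = 1` and `p a ^ n = 0`, then
`a ^ n = b (a + p) a ^ n = b a ^ (n + 1)`, and symmetrically on the right; so a left and right Drazin
invertible `a` satisfies `a ^ n = x a ^ (n + 1) = a ^ (n + 1) y` for one common `n`. Then
`b = a ^ n y ^ (n + 1)` is a Drazin inverse in Drazin's original sense (`ab = ba`, `bab = b`,
`a ^ (n + 1) b = a ^ n`), and `p = 1 - ab` works: `a p` is nilpotent and `(a + p) (b + p) = 1 + a p`
with both factors commuting.
-/

section Monoid

variable {M : Type*} [Monoid M]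

def IsDrazinInverse (a b : M) (n : ℕ) : Prop :=
  Commute a b ∧ b * a * b = b ∧ a ^ (n + 1) * b = a ^ n

variable {a : M}

theorem pow_eq_mul_pow_succ_of_le {x : M} {n m : ℕ} (h : a ^ n = x * a ^ (n + 1))
    (hnm : n ≤ m) : a ^ m = x * a ^ (m + 1) := by
  obtain ⟨k, rfl⟩ := Nat.exists_eq_add_of_le hnm
  rw [pow_add, h, mul_assoc, ← pow_add, Nat.add_right_comm]

theorem pow_eq_pow_succ_mul_of_le {y : M} {n m : ℕ} (h : a ^ n = a ^ (n + 1) * y)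
    (hnm : n ≤ m) : a ^ m = a ^ (m + 1) * y := by
  obtain ⟨k, rfl⟩ := Nat.exists_eq_add_of_le' hnm
  rw [pow_add, h, ← mul_assoc, ← pow_add, Nat.add_assoc]

theorem pow_eq_pow_mul_pow_add {x : M} {n : ℕ} (h : a ^ n = x * a ^ (n + 1)) (j : ℕ) :
    a ^ n = x ^ j * a ^ (n + j) := by
  induction j with
  | zero => simp
  | succ j ih =>
    rw [ih, pow_succ x, mul_assoc, ← Nat.add_assoc,
      ← pow_eq_mul_pow_succ_of_le h (Nat.le_add_right n j)]

theorem pow_eq_pow_add_mul_pow {y : M} {n : ℕ} (h : a ^ n = a ^ (n + 1) * y) (j : ℕ) :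
    a ^ n = a ^ (n + j) * y ^ j := by
  induction j with
  | zero => simp
  | succ j ih =>
    rw [ih, pow_succ' y, ← mul_assoc, ← Nat.add_assoc,
      ← pow_eq_pow_succ_mul_of_le h (Nat.le_add_right n j)]

theorem isDrazinInverse_of_pow_eq {x y : M} {n : ℕ} (hx : a ^ n = x * a ^ (n + 1))
    (hy : a ^ n = a ^ (n + 1) * y) : IsDrazinInverse a (a ^ n * y ^ (n + 1)) n := by
  have hxy : ∀ j, x ^ j * a ^ n = a ^ n * y ^ j := by
    have hxy₁ : x * a ^ n = a ^ n * y := by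
      calc x * a ^ n = x * a ^ (n + 1) * y := by rw [mul_assoc, ← hy]
        _ = a ^ n * y := by rw [← hx]
    intro j
    induction j with
    | zero => simp
    | succ j ih => rw [pow_succ' x, mul_assoc, ih, ← mul_assoc, hxy₁, mul_assoc, ← pow_succ']
  have hab : a * (a ^ n * y ^ (n + 1)) = a ^ n * y ^ n := by
    rw [← mul_assoc, ← pow_succ', pow_succ' y, ← mul_assoc, ← hy]
  have hba : a ^ n * y ^ (n + 1) * a = x ^ n * a ^ n := by
    rw [← hxy, mul_assoc, ← pow_succ, pow_succ x, mul_assoc, ← hx]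
  refine ⟨hab.trans (hba.trans (hxy n)).symm, ?_, ?_⟩
  · rw [hba, mul_assoc, ← mul_assoc (a ^ n), ← pow_add, ← mul_assoc,
      ← pow_eq_pow_mul_pow_add hx n]
  · rw [← mul_assoc, ← pow_add, Nat.add_comm (n + 1) n, ← pow_eq_pow_add_mul_pow hy (n + 1)]

end Monoid

section Ring

variable {A : Type*} [Ring A] {a : A}

theorem IsDrazinInverse.isDrazinInvertible {b : A} {n : ℕ} (h : IsDrazinInverse a b n) :
    IsDrazinInvertible a := by
  obtain ⟨hab, hbab, hpow⟩ := h
  have hidem : IsIdempotentElem (a * b) := by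
    rw [IsIdempotentElem, mul_assoc, ← mul_assoc b, hbab]
  have hap : Commute a (1 - a * b) :=
    (Commute.one_right a).sub_right ((Commute.refl a).mul_right hab)
  have hbp : Commute b (1 - a * b) :=
    (Commute.one_right b).sub_right (hab.symm.mul_right (Commute.refl b))
  have hnil : IsNilpotent (a * (1 - a * b)) := ⟨n + 1, by
    rw [hap.mul_pow, hidem.one_sub.pow_succ_eq, mul_sub, mul_one, ← mul_assoc, ← pow_succ,
      pow_succ' a (n + 1), mul_assoc, hpow, ← pow_succ', sub_self]⟩
  have hprod : (a + (1 - a * b)) * (b + (1 - a * b)) = 1 + a * (1 - a * b) := by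
    have hpb : (1 - a * b) * b = 0 := by rw [sub_mul, one_mul, hab.eq, hbab, sub_self]
    rw [add_mul, mul_add, mul_add, hpb, hidem.one_sub.eq]
    abel
  have hcomm : Commute (a + (1 - a * b)) (b + (1 - a * b)) :=
    (hab.add_right hap).add_left (hbp.symm.add_right (Commute.refl _))
  exact ⟨1 - a * b, hidem.one_sub, hap.eq, hnil,
    (hcomm.isUnit_mul_iff.mp (hprod ▸ hnil.isUnit_one_add)).1⟩

theorem exists_pow_mul_eq_zero_of_isNilpotent_mul {p : A} (hp : IsIdempotentElem p)
    (hap : Commute a p) (hnil : IsNilpotent (a * p)) : ∃ n, a ^ n * p = 0 ∧ p * a ^ n = 0 := by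
  obtain ⟨n, hn⟩ := hnil
  have hzero : a ^ n * p = 0 := by
    rw [← hp.pow_succ_eq n, pow_succ, ← mul_assoc, ← hap.mul_pow, hn, zero_mul]
  exact ⟨n, hzero, (hap.pow_left n).eq ▸ hzero⟩

theorem IsLeftDrazinInvertible.exists_pow_eq_mul_pow_succ (h : IsLeftDrazinInvertible a) :
    ∃ n x, a ^ n = x * a ^ (n + 1) := by
  obtain ⟨p, hp, hap, hnil, b, hb, -⟩ := h
  obtain ⟨n, -, hpa₀⟩ := exists_pow_mul_eq_zero_of_isNilpotent_mul hp hap hnil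
  refine ⟨n, b, ?_⟩
  calc a ^ n = b * (a + p) * a ^ n := by rw [hb, one_mul]
    _ = b * a ^ (n + 1) := by rw [mul_assoc, add_mul, hpa₀, add_zero, ← pow_succ']

theorem IsRightDrazinInvertible.exists_pow_eq_pow_succ_mul (h : IsRightDrazinInvertible a) :
    ∃ n y, a ^ n = a ^ (n + 1) * y := by
  obtain ⟨p, hp, hap, hnil, b, hb, -⟩ := h
  obtain ⟨n, hap₀, -⟩ := exists_pow_mul_eq_zero_of_isNilpotent_mul hp hap hnil
  refine ⟨n, b, ?_⟩
  calc a ^ n = a ^ n * ((a + p) * b) := by rw [hb, mul_one]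
    _ = a ^ (n + 1) * b := by rw [← mul_assoc, mul_add, hap₀, add_zero, ← pow_succ]

theorem IsDrazinInvertible.isLeftDrazinInvertible (h : IsDrazinInvertible a) :
    IsLeftDrazinInvertible a := by
  obtain ⟨p, hp, hap, hnil, u, hu⟩ := h
  have hpu : Commute p u := hu ▸ (Commute.symm hap).add_right (Commute.refl p)
  exact ⟨p, hp, hap, hnil, ↑u⁻¹, hu ▸ u.inv_mul, hpu.units_inv_right.symm.eq⟩

theorem IsDrazinInvertible.isRightDrazinInvertible (h : IsDrazinInvertible a) :
    IsRightDrazinInvertible a := by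
  obtain ⟨p, hp, hap, hnil, u, hu⟩ := h
  have hpu : Commute p u := hu ▸ (Commute.symm hap).add_right (Commute.refl p)
  exact ⟨p, hp, hap, hnil, ↑u⁻¹, hu ▸ u.mul_inv, hpu.units_inv_right.symm.eq⟩

theorem isDrazinInvertible_iff_isLeftDrazinInvertible_and_isRightDrazinInvertible :
    IsDrazinInvertible a ↔ IsLeftDrazinInvertible a ∧ IsRightDrazinInvertible a := by
  refine ⟨fun h => ⟨h.isLeftDrazinInvertible, h.isRightDrazinInvertible⟩, ?_⟩
  rintro ⟨hl, hr⟩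
  obtain ⟨n, x, hx⟩ := hl.exists_pow_eq_mul_pow_succ
  obtain ⟨m, y, hy⟩ := hr.exists_pow_eq_pow_succ_mul
  exact (isDrazinInverse_of_pow_eq (pow_eq_mul_pow_succ_of_le hx (le_max_left n m))
    (pow_eq_pow_succ_mul_of_le hy (le_max_right n m))).isDrazinInvertible

end Ring

theorem drazinInvertible_iff_left_and_right_in_C0_general
    (X : Type*) [NormedAddCommGroup X] [NormedSpace ℂ X]
    (T : X →L[ℂ] X) :
    IsDrazinInvertible ((finiteRankIdeal X).ringCon.toQuotient T) ↔
      IsLeftDrazinInvertible ((finiteRankIdeal X).ringCon.toQuotient T) ∧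
        IsRightDrazinInvertible ((finiteRankIdeal X).ringCon.toQuotient T) :=
  isDrazinInvertible_iff_isLeftDrazinInvertible_and_isRightDrazinInvertible

/-- `π(T)` is Drazin invertible in `C₀(X) = L(X)/F₀(X)` iff it is both left
and right Drazin invertible there. -/
theorem drazinInvertible_iff_left_and_right_in_C0
    (X : Type*) [NormedAddCommGroup X] [NormedSpace ℂ X] [CompleteSpace X]
    (T : X →L[ℂ] X) :
    IsDrazinInvertible ((finiteRankIdeal X).ringCon.toQuotient T) ↔
      IsLeftDrazinInvertible ((finiteRankIdeal X).ringCon.toQuotient T) ∧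
        IsRightDrazinInvertible ((finiteRankIdeal X).ringCon.toQuotient T) :=
  drazinInvertible_iff_left_and_right_in_C0_general X T
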